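/- arXiv:1303.6416 — 2 statements merged into one kernel-verified Lean document; each statement's English description precedes it below -/
import Mathlib

section
/- Define the duality operation on SPTrees by: dual(leaf) = leaf, dual(ser(T₁,T₂)) = par(dual(T₁), dual(T₂)), and dual(par(T₁,T₂)) = ser(dual(T₁), dual(T₂)). Then for every SPTree T, if P(T) = (t, f, a, b, d, c) then P(dual(T)) = (f, t, d, c, a, b). -/
/-- Series-parallel decomposition trees: a leaf (single edge), or a series or parallel
connection of two smaller trees. -/
inductive SPTree : Type
  | leaf : SPTree
  | ser : SPTree → SPTree → SPTree
  | par : SPTree → SPTree → SPTree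

/-- The 6-tuple `(t, f, a, b, d, c)` of parameters of the two-terminal series-parallel graph
encoded by an `SPTree`: the numbers of spanning trees, 2-forests separating the terminals,
acyclic orientations, very acyclic orientations, almost totally cyclic orientations, and
totally cyclic orientations. -/
def P : SPTree → ℚ × ℚ × ℚ × ℚ × ℚ × ℚ
  | .leaf => (1, 1, 2, 0, 2, 0)
  | .ser T₁ T₂ =>
      match P T₁, P T₂ with
      | (t₁, f₁, a₁, b₁, d₁, c₁), (t₂, f₂, a₂, b₂, d₂, c₂) =>
        (t₁ * t₂, t₁ * f₂ + f₁ * t₂, a₁ * a₂,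
         a₁ * a₂ - (a₁ - b₁) * (a₂ - b₂) / 2,
         d₁ * d₂ - (d₁ - c₁) * (d₂ - c₂) / 2, c₁ * c₂)
  | .par T₁ T₂ =>
      match P T₁, P T₂ with
      | (t₁, f₁, a₁, b₁, d₁, c₁), (t₂, f₂, a₂, b₂, d₂, c₂) =>
        (t₁ * f₂ + f₁ * t₂, f₁ * f₂,
         a₁ * a₂ - (a₁ - b₁) * (a₂ - b₂) / 2, b₁ * b₂,
         d₁ * d₂, d₁ * d₂ - (d₁ - c₁) * (d₂ - c₂) / 2)

/-- The sp-duality operation on decomposition trees: swap series and parallel nodes. -/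
def SPTree.dual : SPTree → SPTree
  | .leaf => .leaf
  | .ser T₁ T₂ => .par T₁.dual T₂.dual
  | .par T₁ T₂ => .ser T₁.dual T₂.dual

abbrev SPParams : Type := ℚ × ℚ × ℚ × ℚ × ℚ × ℚ

namespace SPParams

def ser : SPParams → SPParams → SPParams
  | (t₁, f₁, a₁, b₁, d₁, c₁), (t₂, f₂, a₂, b₂, d₂, c₂) =>
    (t₁ * t₂, t₁ * f₂ + f₁ * t₂, a₁ * a₂,
     a₁ * a₂ - (a₁ - b₁) * (a₂ - b₂) / 2,
     d₁ * d₂ - (d₁ - c₁) * (d₂ - c₂) / 2, c₁ * c₂)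

def par : SPParams → SPParams → SPParams
  | (t₁, f₁, a₁, b₁, d₁, c₁), (t₂, f₂, a₂, b₂, d₂, c₂) =>
    (t₁ * f₂ + f₁ * t₂, f₁ * f₂,
     a₁ * a₂ - (a₁ - b₁) * (a₂ - b₂) / 2, b₁ * b₂,
     d₁ * d₂, d₁ * d₂ - (d₁ - c₁) * (d₂ - c₂) / 2)

def dual : SPParams → SPParams
  | (t, f, a, b, d, c) => (f, t, d, c, a, b)

theorem dual_ser (p q : SPParams) : dual (ser p q) = par (dual p) (dual q) := by
  obtain ⟨t₁, f₁, a₁, b₁, d₁, c₁⟩ := p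
  obtain ⟨t₂, f₂, a₂, b₂, d₂, c₂⟩ := q
  simp only [ser, par, dual, add_comm]

theorem dual_par (p q : SPParams) : dual (par p q) = ser (dual p) (dual q) := by
  obtain ⟨t₁, f₁, a₁, b₁, d₁, c₁⟩ := p
  obtain ⟨t₂, f₂, a₂, b₂, d₂, c₂⟩ := q
  simp only [ser, par, dual, add_comm]

end SPParams

theorem P_ser (T₁ T₂ : SPTree) : P (.ser T₁ T₂) = SPParams.ser (P T₁) (P T₂) := rfl

theorem P_par (T₁ T₂ : SPTree) : P (.par T₁ T₂) = SPParams.par (P T₁) (P T₂) := rfl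

theorem P_dual_eq_dual_P (T : SPTree) : P T.dual = SPParams.dual (P T) := by
  induction T with
  | leaf => rfl
  | ser T₁ T₂ ih₁ ih₂ => rw [SPTree.dual, P_par, P_ser, SPParams.dual_ser, ih₁, ih₂]
  | par T₁ T₂ ih₁ ih₂ => rw [SPTree.dual, P_ser, P_par, SPParams.dual_par, ih₁, ih₂]

/-- Lemma 3.4 in SPTree form: the sp-dual has parameters `(f, t, d, c, a, b)` when the
original has parameters `(t, f, a, b, d, c)`. -/
theorem P_dual (T : SPTree) (t f a b d c : ℚ) (h : P T = (t, f, a, b, d, c)) :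
    P T.dual = (f, t, d, c, a, b) := by
  rw [P_dual_eq_dual_P, h, SPParams.dual]
end

section
/- For every SPTree T with P(T) = (t, f, a, b, d, c): t ≥ 1, f ≥ 1, a ≥ 2, d ≥ 2, a ≥ b ≥ 0, d ≥ c ≥ 0, and moreover a − b and d − c are even integers (so the recursion defining P takes values in the integers). -/
/-!
Over `ℚ` the halving in the recursion need not preserve integrality, so we carry a stronger
invariant: `b` and `c` are natural numbers and `a = b + 2k`, `d = c + 2l` with `k, l ∈ ℕ`.
Then `(a₁ - b₁)(a₂ - b₂)/2 = 2k₁k₂` is an even natural number, every new entry is a polynomial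
with natural coefficients in the old `b, k` (or `c, l`), and `a, d ≥ 2` survive because the
subtracted term is at most half of the product `a₁a₂` (resp. `d₁d₂`).
-/

/-- `x - y` counts the orientations not counted by `y`, which come in reversal pairs. -/
def IsOrientationCount (x y : ℚ) : Prop :=
  2 ≤ x ∧ ∃ m k : ℕ, y = m ∧ x = m + 2 * k

namespace IsOrientationCount

variable {x₁ y₁ x₂ y₂ : ℚ}

theorem mul_fst (h₁ : IsOrientationCount x₁ y₁) (h₂ : IsOrientationCount x₂ y₂) :
    IsOrientationCount (x₁ * x₂) (x₁ * x₂ - (x₁ - y₁) * (x₂ - y₂) / 2) := by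
  obtain ⟨hx₁, m₁, k₁, rfl, rfl⟩ := h₁
  obtain ⟨hx₂, m₂, k₂, rfl, rfl⟩ := h₂
  refine ⟨by nlinarith, m₁ * m₂ + 2 * (m₁ * k₂ + k₁ * m₂ + k₁ * k₂), k₁ * k₂, ?_, ?_⟩ <;>
    push_cast <;> ring

theorem mul_snd (h₁ : IsOrientationCount x₁ y₁) (h₂ : IsOrientationCount x₂ y₂) :
    IsOrientationCount (x₁ * x₂ - (x₁ - y₁) * (x₂ - y₂) / 2) (y₁ * y₂) := by
  obtain ⟨hx₁, m₁, k₁, rfl, rfl⟩ := h₁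
  obtain ⟨hx₂, m₂, k₂, rfl, rfl⟩ := h₂
  have gap_le : (2 * k₁ : ℚ) * (2 * k₂) ≤ (m₁ + 2 * k₁) * (m₂ + 2 * k₂) := by
    gcongr <;> simp
  refine ⟨?_, m₁ * m₂, m₁ * k₂ + k₁ * m₂ + k₁ * k₂, by push_cast; ring, by push_cast; ring⟩
  nlinarith

end IsOrientationCount

def SPInvariant : ℚ × ℚ × ℚ × ℚ × ℚ × ℚ → Prop
  | (t, f, a, b, d, c) => 1 ≤ t ∧ 1 ≤ f ∧ IsOrientationCount a b ∧ IsOrientationCount d c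

theorem spInvariant_P : ∀ T : SPTree, SPInvariant (P T)
  | .leaf =>
    ⟨le_rfl, le_rfl, ⟨le_rfl, 0, 1, by norm_num, by norm_num⟩, ⟨le_rfl, 0, 1, by norm_num, by norm_num⟩⟩
  | .ser T₁ T₂ => by
    have h₁ := spInvariant_P T₁
    have h₂ := spInvariant_P T₂
    rw [P]
    generalize P T₁ = p₁ at h₁ ⊢
    generalize P T₂ = p₂ at h₂ ⊢
    obtain ⟨t₁, f₁, a₁, b₁, d₁, c₁⟩ := p₁
    obtain ⟨t₂, f₂, a₂, b₂, d₂, c₂⟩ := p₂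
    obtain ⟨ht₁, hf₁, hab₁, hdc₁⟩ := h₁
    obtain ⟨ht₂, hf₂, hab₂, hdc₂⟩ := h₂
    exact ⟨one_le_mul_of_one_le_of_one_le ht₁ ht₂, by nlinarith, hab₁.mul_fst hab₂, hdc₁.mul_snd hdc₂⟩
  | .par T₁ T₂ => by
    have h₁ := spInvariant_P T₁
    have h₂ := spInvariant_P T₂
    rw [P]
    generalize P T₁ = p₁ at h₁ ⊢
    generalize P T₂ = p₂ at h₂ ⊢
    obtain ⟨t₁, f₁, a₁, b₁, d₁, c₁⟩ := p₁
    obtain ⟨t₂, f₂, a₂, b₂, d₂, c₂⟩ := p₂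
    obtain ⟨ht₁, hf₁, hab₁, hdc₁⟩ := h₁
    obtain ⟨ht₂, hf₂, hab₂, hdc₂⟩ := h₂
    exact ⟨by nlinarith, one_le_mul_of_one_le_of_one_le hf₁ hf₂, hab₁.mul_snd hab₂, hdc₁.mul_fst hdc₂⟩

/-- Basic bounds and parities for the parameters of an SPTree: `t, f ≥ 1`, `a, d ≥ 2`,
`a ≥ b ≥ 0`, `d ≥ c ≥ 0`, and `a - b` and `d - c` are even integers. -/
theorem P_bounds (T : SPTree) (t f a b d c : ℚ) (h : P T = (t, f, a, b, d, c)) :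
    1 ≤ t ∧ 1 ≤ f ∧ 2 ≤ a ∧ 2 ≤ d ∧ b ≤ a ∧ 0 ≤ b ∧ c ≤ d ∧ 0 ≤ c ∧
      (∃ k : ℤ, a - b = 2 * (k : ℚ)) ∧ (∃ k : ℤ, d - c = 2 * (k : ℚ)) := by
  have hT := spInvariant_P T
  rw [h] at hT
  obtain ⟨ht, hf, ⟨ha, m, k, rfl, rfl⟩, ⟨hd, n, l, rfl, rfl⟩⟩ := hT
  refine ⟨ht, hf, ha, hd, ?_, by positivity, ?_, by positivity, ⟨k, by push_cast; ring⟩,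
    ⟨l, by push_cast; ring⟩⟩ <;> simp
end
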